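/- The complex N^• = [N^{n+1} → N^n → ⋯ → N^1 → N^0] with differentials ∂ (and ∂̂f := Σ_{s∈{±}^n} (−1)^{s_1+⋯+s_n} f_{s_1…s_n} in the last step) is exact: the maps H (and (Ĥf)_{s_1…s_n} := (−1)^{s_1+⋯+s_n} P_1^{s_1}⋯P_n^{s_n} f) form a contracting homotopy in the category of k-vector spaces. In particular, ∂H + ĤP∂̂ = 1 on N^1 and ∂̂Ĥ = 1 on N^0. -/

import Mathlib

/-!
STATEMENT 12: The complex `N^• = [N^{n+1} → … → N^1 → N^0]` with differentials
`∂` (and `∂̂ f = ∑_{s∈{±}^n} (−1)^{s₁+⋯+s_n} f_{s₁…s_n}` in the last step) is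
an exact complex: the maps `H` and `(Ĥ a)_{s₁…s_n} = (−1)^{s₁+⋯+s_n}
P₁^{s₁}⋯P_n^{s_n} a` form a contracting homotopy in the category of `k`-vector
spaces.  In particular `∂H + Ĥ∂̂ = 1` on `N^1` and `∂̂Ĥ = 1` on `N^0 = A`.

The components of elements of `N^p` are indexed by the tuples `s ∈ {+,−,0}^n`
of degree `deg s = 1 + #{i : s_i = 0} = p`.
-/

open scoped Classical

abbrev Fam (n : ℕ) (A : Type*) := (Fin n → SignType) → A

noncomputable def zcount {n : ℕ} (s : Fin n → SignType) (i : Fin n) : ℕ :=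
  (Finset.univ.filter fun j => i < j ∧ s j = 0).card

/-- `deg(s₁,…,s_n) = 1 + #{i : s_i = 0}`. -/
noncomputable def degS {n : ℕ} (s : Fin n → SignType) : ℕ :=
  1 + (Finset.univ.filter fun i => s i = 0).card

noncomputable def bd {n : ℕ} {A : Type*} [Ring A] (i : Fin n) (f : Fam n A) : Fam n A :=
  fun s => if s i = 0 then 0
    else ((-1 : ℤ) ^ zcount s i) • f (Function.update s i 0)

noncomputable def bigD {n : ℕ} {A : Type*} [Ring A] (f : Fam n A) : Fam n A :=
  fun s => ∑ i : Fin n, bd i f s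

noncomputable def Psgn {n : ℕ} {A : Type*} [Ring A] (P : Fin n → A) (i : Fin n) :
    SignType → A
  | SignType.pos => P i
  | SignType.neg => 1 - P i
  | SignType.zero => 0

noncomputable def eps {n : ℕ} {A : Type*} [Ring A] (P : Fin n → A) (i : Fin n)
    (f : Fam n A) : Fam n A :=
  fun s => if s i = 0 then 0
    else ((s i : ℤ)) • (Psgn P i (s i) *
      ((1 : ℤ) • f (Function.update s i 1) + (-1 : ℤ) • f (Function.update s i (-1))))

noncomputable def hmt {n : ℕ} {A : Type*} [Ring A] (P : Fin n → A) (i : Fin n)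
    (f : Fam n A) : Fam n A :=
  fun s => if s i = 0 then
      ((-1 : ℤ) ^ zcount s i) •
        ((1 - P i) * f (Function.update s i 1) + P i * f (Function.update s i (-1)))
    else 0

noncomputable def epsUpTo {n : ℕ} {A : Type*} [Ring A] (P : Fin n → A) :
    ℕ → Fam n A → Fam n A
  | 0 => id
  | (m+1) => fun f => if h : m < n then epsUpTo P m (eps P ⟨m, h⟩ f) else epsUpTo P m f

noncomputable def bigH {n : ℕ} {A : Type*} [Ring A] (P : Fin n → A) (f : Fam n A) :
    Fam n A :=
  fun s => ∑ i : Fin n, epsUpTo P (i : ℕ) (hmt P i f) s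

/-- `∂̂ : N^1 → N^0 = A`, `f ↦ ∑_{s∈{±}^n} (−1)^{s₁+⋯+s_n} f_s`. -/
noncomputable def dHat {n : ℕ} {A : Type*} [Ring A] (f : Fam n A) : A :=
  ∑ γ : Fin n → Bool,
    (∏ j, (if γ j then (1 : ℤ) else -1)) • f (fun j => if γ j then 1 else -1)

/-- `Ĥ : N^0 = A → N^1`, `(Ĥ a)_{s₁…s_n} = (−1)^{s₁+⋯+s_n} P₁^{s₁}⋯P_n^{s_n} a`
(supported on the tuples with all `s_i ∈ {±}`). -/
noncomputable def hHat {n : ℕ} {A : Type*} [Ring A] (P : Fin n → A) (a : A) : Fam n A :=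
  fun s => if ∀ j, s j ≠ 0 then
      (∏ j, ((s j : ℤ))) •
        (((List.finRange n).map (fun j => Psgn P j (s j))).prod * a)
    else 0


/-!
Write `∂ = ∑ ∂_i` and `H = ∑_i ε_1 ⋯ ε_{i-1} h_i`. In the endomorphism ring of the families,
the one-coordinate operators satisfy `∂_i² = 0`, `∂_i h_i + h_i ∂_i = 1 - ε_i`,
`∂_i ε_i = ε_i ∂_i = 0` and, for `i ≠ j`, `∂_i ∂_j = -∂_j ∂_i`, `∂_j h_i = -h_i ∂_j`,
`∂_j ε_i = ε_i ∂_j`. These relations alone give `∂² = 0` and, by telescoping,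
`∂H + H∂ = 1 - ε_1 ⋯ ε_n`.

Evaluated at `s`, `ε_1 ⋯ ε_n f` is the coefficient `∏ s_i P_i^{s_i}` times the iterated
difference of `f` over the whole cube `{±}^n`, which is `∂̂ f`; hence `ε_1 ⋯ ε_n = Ĥ ∂̂`, which
vanishes on `N^p` for `p ≥ 2` because `∂̂` only reads components of degree 1. Finally `∂̂ Ĥ = 1`
because the ordered product `∏ (P_i + (1 - P_i))` expands to the sum defining `∂̂ Ĥ`.
-/

open Function

theorem sum_mul_self_eq_zero_of_anticommute {R ι : Type*} [Ring R] (s : Finset ι) (d : ι → R)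
    (hsq : ∀ i, d i * d i = 0) (hanti : ∀ i j, i ≠ j → d i * d j + d j * d i = 0) :
    (∑ i ∈ s, d i) * (∑ i ∈ s, d i) = 0 := by
  classical
  induction s using Finset.induction_on with
  | empty => simp
  | insert a s ha ih =>
    have hcross : d a * ∑ i ∈ s, d i + (∑ i ∈ s, d i) * d a = 0 := by
      rw [Finset.mul_sum, Finset.sum_mul, ← Finset.sum_add_distrib]
      exact Finset.sum_eq_zero fun i hi => hanti a i (ne_of_mem_of_not_mem hi ha).symm
    rw [Finset.sum_insert ha, add_mul, mul_add, mul_add, hsq, ih, zero_add, add_zero]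
    exact hcross

theorem Fin.sum_castSucc_sub_succ {M : Type*} [AddCommGroup M] :
    ∀ {n : ℕ} (g : Fin (n + 1) → M),
      ∑ i : Fin n, (g i.castSucc - g i.succ) = g 0 - g (last n)
  | 0, g => by simp
  | n + 1, g => by
    rw [Fin.sum_univ_castSucc]
    simp_rw [Fin.succ_castSucc]
    rw [Fin.sum_castSucc_sub_succ (fun i => g i.castSucc)]
    simp

section PartialProd

open Fin (partialProd)

variable {R : Type*} [Ring R] {n : ℕ} {d e : Fin n → R}

theorem commute_partialProd {a : R} {m : Fin (n + 1)}
    (h : ∀ k : Fin n, k.castSucc < m → Commute a (e k)) : Commute a (partialProd e m) := by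
  induction m using Fin.induction with
  | zero => simp
  | succ i ih =>
    rw [Fin.partialProd_succ]
    exact (ih fun k hk => h k (hk.trans i.castSucc_lt_succ)).mul_right (h i i.castSucc_lt_succ)

theorem partialProd_mul_eq_zero (hde : ∀ i j, i ≠ j → Commute (d j) (e i))
    (hed : ∀ i, e i * d i = 0) {j : Fin n} {m : Fin (n + 1)} (hjm : j.castSucc < m) :
    partialProd e m * d j = 0 := by
  induction m using Fin.induction with
  | zero => exact absurd hjm (Fin.not_lt_zero _)
  | succ i ih =>
    rw [Fin.partialProd_succ, mul_assoc]
    rcases eq_or_ne j i with rfl | hji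
    · rw [hed, mul_zero]
    · rw [← (hde i j hji.symm).eq, ← mul_assoc,
        ih (Fin.castSucc_lt_castSucc_iff.mpr ((Fin.castSucc_lt_succ_iff.mp hjm).lt_of_ne hji)),
        zero_mul]

theorem mul_partialProd_eq_zero (hde : ∀ i j, i ≠ j → Commute (d j) (e i))
    (hde_self : ∀ i, d i * e i = 0) {j : Fin n} {m : Fin (n + 1)} (hjm : j.castSucc < m) :
    d j * partialProd e m = 0 := by
  induction m using Fin.induction with
  | zero => exact absurd hjm (Fin.not_lt_zero _)
  | succ i ih =>
    rw [Fin.partialProd_succ, ← mul_assoc]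
    rcases eq_or_ne j i with rfl | hji
    · rw [(commute_partialProd fun k hk =>
        hde k j (Fin.castSucc_lt_castSucc_iff.mp hk).ne).eq, mul_assoc, hde_self, mul_zero]
    · rw [ih (Fin.castSucc_lt_castSucc_iff.mpr ((Fin.castSucc_lt_succ_iff.mp hjm).lt_of_ne hji)),
        zero_mul]

theorem anticomm_partialProd_mul {h : Fin n → R}
    (hdh : ∀ i, d i * h i + h i * d i = 1 - e i)
    (hdh_ne : ∀ i j, i ≠ j → d j * h i + h i * d j = 0)
    (hde : ∀ i j, i ≠ j → Commute (d j) (e i))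
    (hde_self : ∀ i, d i * e i = 0) (hed_self : ∀ i, e i * d i = 0) (i j : Fin n) :
    d j * (partialProd e i.castSucc * h i) + partialProd e i.castSucc * h i * d j =
      if j = i then partialProd e i.castSucc - partialProd e i.succ else 0 := by
  rcases lt_trichotomy j i with hji | rfl | hij
  · have hji' : j.castSucc < i.castSucc := Fin.castSucc_lt_castSucc_iff.mpr hji
    rw [if_neg hji.ne, ← mul_assoc, mul_partialProd_eq_zero hde hde_self hji', zero_mul, zero_add,
      mul_assoc, eq_neg_of_add_eq_zero_right (hdh_ne i j hji.ne'), mul_neg, ← mul_assoc,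
      partialProd_mul_eq_zero hde hed_self hji', zero_mul, neg_zero]
  · have hE : Commute (d j) (partialProd e j.castSucc) := commute_partialProd fun k hk =>
      hde k j (Fin.castSucc_lt_castSucc_iff.mp hk).ne
    rw [if_pos rfl, ← mul_assoc, hE.eq, mul_assoc, mul_assoc, ← mul_add, hdh,
      Fin.partialProd_succ, mul_sub, mul_one]
  · have hE : Commute (d j) (partialProd e i.castSucc) := commute_partialProd fun k hk =>
      hde k j ((Fin.castSucc_lt_castSucc_iff.mp hk).trans hij).ne
    rw [if_neg hij.ne', ← mul_assoc, hE.eq, mul_assoc, mul_assoc, ← mul_add, hdh_ne i j hij.ne,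
      mul_zero]

theorem sum_mul_add_mul_sum_eq_one_sub_partialProd (h : Fin n → R)
    (hdh : ∀ i, d i * h i + h i * d i = 1 - e i)
    (hdh_ne : ∀ i j, i ≠ j → d j * h i + h i * d j = 0)
    (hde : ∀ i j, i ≠ j → Commute (d j) (e i))
    (hde_self : ∀ i, d i * e i = 0) (hed_self : ∀ i, e i * d i = 0) :
    (∑ j, d j) * (∑ i, partialProd e i.castSucc * h i) +
      (∑ i, partialProd e i.castSucc * h i) * (∑ j, d j) = 1 - partialProd e (Fin.last n) := by
  rw [Finset.sum_mul_sum, Finset.sum_mul_sum, Finset.sum_comm, ← Finset.sum_add_distrib]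
  simp only [← Finset.sum_add_distrib,
    anticomm_partialProd_mul hdh hdh_ne hde hde_self hed_self, Finset.sum_ite_eq',
    Finset.mem_univ, if_true]
  rw [Fin.sum_castSucc_sub_succ, Fin.partialProd_zero]

end PartialProd

section Sign

variable {n : ℕ} {s : Fin n → SignType} {i j : Fin n}

theorem zcount_update_of_le (hji : j ≤ i) (σ : SignType) :
    zcount (update s j σ) i = zcount s i := by
  unfold zcount
  congr 1
  refine Finset.filter_congr fun k _ => ?_
  rcases eq_or_ne k j with rfl | hk
  · simp [hji.not_gt]
  · rw [update_of_ne hk]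

theorem zcount_update_of_iff {σ : SignType} (h : σ = 0 ↔ s j = 0) (i : Fin n) :
    zcount (update s j σ) i = zcount s i := by
  unfold zcount
  congr 1
  refine Finset.filter_congr fun k _ => ?_
  rcases eq_or_ne k j with rfl | hk
  · simp [h]
  · rw [update_of_ne hk]

theorem zcount_update_zero_of_lt (hij : i < j) (hj : s j ≠ 0) :
    zcount (update s j 0) i = zcount s i + 1 := by
  have hset : (Finset.univ.filter fun k => i < k ∧ update s j 0 k = 0) =
      insert j (Finset.univ.filter fun k => i < k ∧ s k = 0) := by
    ext k
    rcases eq_or_ne k j with rfl | hk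
    · simp [hij]
    · simp [hk]
  rw [zcount, zcount, hset, Finset.card_insert_of_notMem (by simp [hj])]

theorem neg_one_pow_zcount_anticomm (hij : i ≠ j) (hi : s i ≠ 0) (hj : s j ≠ 0) :
    (-1 : ℤ) ^ zcount s i * (-1) ^ zcount (update s i 0) j =
      -((-1) ^ zcount s j * (-1) ^ zcount (update s j 0) i) := by
  rcases hij.lt_or_gt with h | h
  · rw [zcount_update_of_le h.le, zcount_update_zero_of_lt h hj]; ring
  · rw [zcount_update_of_le h.le, zcount_update_zero_of_lt h hi]; ring

theorem neg_one_pow_zcount_anticomm_of_eq_zero (hij : i ≠ j) (hi : s i = 0) (hj : s j ≠ 0)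
    {σ : SignType} (hσ : σ ≠ 0) :
    (-1 : ℤ) ^ zcount s j * (-1) ^ zcount (update s j 0) i =
      -((-1) ^ zcount s i * (-1) ^ zcount (update s i σ) j) := by
  rcases hij.lt_or_gt with h | h
  · rw [zcount_update_of_le h.le, zcount_update_zero_of_lt h hj]; ring
  · have h' := zcount_update_zero_of_lt (s := update s i σ) h (by simpa using hσ)
    rw [update_idem, ← hi, update_eq_self] at h'
    rw [zcount_update_of_le h.le, h']; ring

end Sign

section Operators

variable {n : ℕ} {A : Type*} [Ring A] (P : Fin n → A) {i j : Fin n} {f : Fam n A}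
  {s : Fin n → SignType}

noncomputable def signedPsgn (i : Fin n) (σ : SignType) : A := (σ : ℤ) • Psgn P i σ

theorem bd_apply_of_ne_zero (hs : s i ≠ 0) :
    bd i f s = (-1 : ℤ) ^ zcount s i • f (update s i 0) :=
  if_neg hs

theorem bd_apply_update_self {σ : SignType} (hσ : σ ≠ 0) :
    bd i f (update s i σ) = (-1 : ℤ) ^ zcount s i • f (update s i 0) := by
  rw [bd_apply_of_ne_zero (by simpa using hσ), update_idem, zcount_update_of_le le_rfl]

theorem hmt_apply_of_eq_zero (hs : s i = 0) :
    hmt P i f s = (-1 : ℤ) ^ zcount s i •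
      ((1 - P i) * f (update s i 1) + P i * f (update s i (-1))) :=
  if_pos hs

theorem eps_apply :
    eps P i f s = signedPsgn P i (s i) * (f (update s i 1) - f (update s i (-1))) := by
  by_cases hs : s i = 0
  · simp [eps, signedPsgn, hs]
  · simp [eps, signedPsgn, hs, sub_eq_add_neg, mul_assoc]

theorem bd_add (i : Fin n) (f g : Fam n A) : bd i (f + g) = bd i f + bd i g := by
  funext s
  by_cases hs : s i = 0 <;> simp [bd, hs]

theorem hmt_add (i : Fin n) (f g : Fam n A) : hmt P i (f + g) = hmt P i f + hmt P i g := by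
  funext s
  by_cases hs : s i = 0
  · simp only [hmt, hs, if_true, Pi.add_apply, mul_add, ← smul_add]
    abel_nf
  · simp [hmt, hs]

theorem eps_add (i : Fin n) (f g : Fam n A) : eps P i (f + g) = eps P i f + eps P i g := by
  funext s
  simp only [eps_apply, Pi.add_apply, ← mul_add]
  abel_nf

theorem bd_bd_self (f : Fam n A) : bd i (bd i f) = 0 := by
  funext s
  by_cases hs : s i = 0 <;> simp [bd, hs]

theorem bd_bd_add_bd_bd (hij : i ≠ j) (f : Fam n A) :
    bd i (bd j f) + bd j (bd i f) = 0 := by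
  funext s
  by_cases hi : s i = 0
  · simp [bd, hi, update_of_ne hij]
  by_cases hj : s j = 0
  · simp [bd, hj, update_of_ne hij.symm]
  rw [Pi.add_apply, bd_apply_of_ne_zero hi, bd_apply_of_ne_zero hj,
    bd_apply_of_ne_zero (by rwa [update_of_ne hij.symm]),
    bd_apply_of_ne_zero (by rwa [update_of_ne hij]), smul_smul, smul_smul,
    neg_one_pow_zcount_anticomm hij hi hj, update_comm hij, neg_smul, neg_add_cancel,
    Pi.zero_apply]

theorem bd_hmt_add_hmt_bd_self (i : Fin n) (f : Fam n A) :
    bd i (hmt P i f) + hmt P i (bd i f) = f - eps P i f := by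
  funext s
  simp only [Pi.add_apply, Pi.sub_apply, eps_apply]
  by_cases hs : s i = 0
  · rw [bd, if_pos hs, hmt_apply_of_eq_zero P hs, bd_apply_update_self one_ne_zero,
      bd_apply_update_self (by decide : (-1 : SignType) ≠ 0), ← hs, update_eq_self, hs,
      mul_smul_comm, mul_smul_comm, ← smul_add, smul_smul, ← pow_add,
      Even.neg_one_pow ⟨_, rfl⟩, one_smul, ← add_mul, sub_add_cancel, one_mul]
    simp [signedPsgn]
  · rw [bd_apply_of_ne_zero hs, hmt_apply_of_eq_zero P (by simp), update_idem, update_idem,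
      zcount_update_of_le le_rfl, smul_smul, ← pow_add, ← two_mul, pow_mul, neg_one_sq,
      one_pow, one_smul, hmt, if_neg hs, add_zero]
    rcases SignType.trichotomy (s i) with h | h | h
    · rw [show update s i (-1) = s by rw [← h, update_eq_self], h]
      simp only [signedPsgn, Psgn, SignType.coe_neg_one, neg_smul, one_smul]
      noncomm_ring
    · exact absurd h hs
    · rw [show update s i 1 = s by rw [← h, update_eq_self], h]
      simp only [signedPsgn, Psgn, SignType.coe_one, one_smul]
      noncomm_ring

theorem bd_hmt_add_hmt_bd (hij : i ≠ j) (f : Fam n A) :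
    bd j (hmt P i f) + hmt P i (bd j f) = 0 := by
  funext s
  rcases ne_or_eq (s i) 0 with hi | hi
  · simp [bd, hmt, hi, update_of_ne hij]
  by_cases hj : s j = 0
  · simp [bd, hmt, hj, update_of_ne hij.symm]
  have hupd : ∀ σ : SignType, σ ≠ 0 → bd j f (update s i σ) =
      (-1 : ℤ) ^ zcount (update s i σ) j • f (update (update s j 0) i σ) := fun σ hσ => by
    rw [bd_apply_of_ne_zero (by rwa [update_of_ne hij.symm]), update_comm hij]
  have hz : zcount (update s i (-1)) j = zcount (update s i 1) j := by
    rw [← update_idem (a := i) (1 : SignType) (-1) s, zcount_update_of_iff (by simp)]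
  rw [Pi.add_apply, bd_apply_of_ne_zero hj, hmt_apply_of_eq_zero P (by rwa [update_of_ne hij]),
    hmt_apply_of_eq_zero P hi, hupd 1 one_ne_zero, hupd (-1) (by decide), hz, mul_smul_comm,
    mul_smul_comm, ← smul_add, smul_smul, smul_smul, ← add_smul,
    neg_one_pow_zcount_anticomm_of_eq_zero hij hi hj one_ne_zero, neg_add_cancel, zero_smul,
    Pi.zero_apply]

theorem bd_eps_comm (hij : i ≠ j) (f : Fam n A) : bd j (eps P i f) = eps P i (bd j f) := by
  funext s
  by_cases hi : s i = 0
  · simp [bd, eps_apply, hi, signedPsgn, update_of_ne hij]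
  by_cases hj : s j = 0
  · simp [bd, eps_apply, hj, update_of_ne hij.symm]
  have hupd : ∀ σ : SignType, σ ≠ 0 → bd j f (update s i σ) =
      (-1 : ℤ) ^ zcount s j • f (update (update s j 0) i σ) := fun σ hσ => by
    rw [bd_apply_of_ne_zero (by rwa [update_of_ne hij.symm]), update_comm hij,
      zcount_update_of_iff (iff_of_false hσ hi)]
  rw [bd_apply_of_ne_zero hj, eps_apply, eps_apply, update_of_ne hij, hupd 1 one_ne_zero,
    hupd (-1) (by decide), ← smul_sub, mul_smul_comm]

theorem bd_eps_self (f : Fam n A) : bd i (eps P i f) = 0 := by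
  funext s
  by_cases hs : s i = 0 <;> simp [bd, eps, hs]

theorem eps_bd_self (f : Fam n A) : eps P i (bd i f) = 0 := by
  funext s
  rw [eps_apply, bd_apply_update_self one_ne_zero, bd_apply_update_self (by decide), sub_self,
    mul_zero, Pi.zero_apply]

end Operators

theorem List.prod_map_smul {ι M R : Type*} [CommMonoid M] [Monoid R] [MulAction M R]
    [IsScalarTower M R R] [SMulCommClass M R R] (L : List ι) (z : ι → M) (x : ι → R) :
    (L.map fun k => z k • x k).prod = (L.map z).prod • (L.map x).prod := by
  induction L with
  | nil => simp
  | cons a L ih => simp [ih, smul_mul_smul_comm]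

section Cube

variable {n : ℕ}

/-- `∑ t, cubeWeight L s t • f t` is the iterated difference of `f` at `s` in the directions
of `L`, where the difference in direction `k` is `f (s[k ↦ +]) - f (s[k ↦ -])`. -/
def cubeWeight (L : List (Fin n)) (s t : Fin n → SignType) : ℤ :=
  ∏ k, if k ∈ L then (t k : ℤ) else if t k = s k then 1 else 0

theorem cubeWeight_nil (s t : Fin n → SignType) :
    cubeWeight [] s t = if t = s then 1 else 0 := by
  simp [cubeWeight, Finset.prod_boole, funext_iff]

theorem cubeWeight_finRange (s t : Fin n → SignType) :
    cubeWeight (List.finRange n) s t = ∏ k, (t k : ℤ) := by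
  simp [cubeWeight]

theorem cubeWeight_eq_zero {a : Fin n} {L : List (Fin n)} {s t : Fin n → SignType} (ha : a ∉ L)
    (h : t a ≠ s a) : cubeWeight L s t = 0 :=
  Finset.prod_eq_zero (Finset.mem_univ a) (by simp [ha, h])

theorem cubeWeight_cons {a : Fin n} {L : List (Fin n)} (ha : a ∉ L) (s t : Fin n → SignType) :
    cubeWeight (a :: L) s t = ∑ σ : SignType, (σ : ℤ) * cubeWeight L (update s a σ) t := by
  have hrest : ∀ σ,
      ∏ k ∈ {a}ᶜ, (if k ∈ L then (t k : ℤ) else if t k = update s a σ k then 1 else 0) =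
        ∏ k ∈ {a}ᶜ, (if k ∈ a :: L then (t k : ℤ) else if t k = s k then 1 else 0) := fun σ =>
    Finset.prod_congr rfl fun k hk => by
      have hk : k ≠ a := by simpa using hk
      simp [hk]
  simp only [cubeWeight, Fintype.prod_eq_mul_prod_compl a, hrest, ← mul_assoc,
    ← Finset.sum_mul]
  congr 1
  simp [ha]

theorem cubeWeight_cons_eq_sub {a : Fin n} {L : List (Fin n)} (ha : a ∉ L)
    (s t : Fin n → SignType) :
    cubeWeight (a :: L) s t =
      cubeWeight L (update s a 1) t - cubeWeight L (update s a (-1)) t := by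
  rw [cubeWeight_cons ha, SignType.univ_eq]
  simp
  ring

theorem sum_cubeWeight_smul_prod {A : Type*} [Ring A] (g : Fin n → SignType → A)
    {L : List (Fin n)} (hL : L.Nodup) (s : Fin n → SignType) :
    ∑ t, cubeWeight L s t • (L.map fun k => g k (t k)).prod =
      (L.map fun k => ∑ σ : SignType, (σ : ℤ) • g k σ).prod := by
  induction L generalizing s with
  | nil => simp [cubeWeight_nil]
  | cons a L ih =>
    obtain ⟨ha, hL⟩ := List.nodup_cons.mp hL
    have hterm : ∀ (σ : SignType) t, ((σ : ℤ) * cubeWeight L (update s a σ) t) •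
        (g a (t a) * (L.map fun k => g k (t k)).prod) =
        ((σ : ℤ) • g a σ) * (cubeWeight L (update s a σ) t • (L.map fun k => g k (t k)).prod) := by
      intro σ t
      by_cases ht : t a = σ
      · rw [ht, smul_mul_smul_comm]
      · rw [cubeWeight_eq_zero ha (by simpa using ht)]
        simp
    simp only [List.map_cons, List.prod_cons, cubeWeight_cons ha, Finset.sum_smul, hterm]
    rw [Finset.sum_comm, Finset.sum_mul]
    simp only [← Finset.mul_sum, ih hL]

end Cube

section Complex

variable {n : ℕ} {A : Type*} [Ring A] (P : Fin n → A)

noncomputable def bdEnd (i : Fin n) : Module.End ℤ (Fam n A) :=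
  (AddMonoidHom.mk' (bd i) (bd_add i)).toIntLinearMap

noncomputable def epsEnd (i : Fin n) : Module.End ℤ (Fam n A) :=
  (AddMonoidHom.mk' (eps P i) (eps_add P i)).toIntLinearMap

noncomputable def hmtEnd (i : Fin n) : Module.End ℤ (Fam n A) :=
  (AddMonoidHom.mk' (hmt P i) (hmt_add P i)).toIntLinearMap

theorem coe_sum_bdEnd : ⇑(∑ i, bdEnd (n := n) (A := A) i) = bigD := by
  funext f s
  simp [bigD, bdEnd]

theorem epsUpTo_eq_partialProd (m : Fin (n + 1)) :
    epsUpTo P m = ⇑(Fin.partialProd (epsEnd P) m) := by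
  induction m using Fin.induction with
  | zero => rfl
  | succ i ih =>
    rw [Fin.partialProd_succ, Module.End.coe_mul, ← ih]
    funext f
    simp [epsUpTo, epsEnd]

theorem epsUpTo_eq_partialProd_last :
    epsUpTo P n = ⇑(Fin.partialProd (epsEnd P) (Fin.last n)) :=
  epsUpTo_eq_partialProd P (Fin.last n)

theorem coe_sum_partialProd_mul_hmtEnd :
    ⇑(∑ i, Fin.partialProd (epsEnd P) i.castSucc * hmtEnd P i) = bigH P := by
  funext f s
  simp [bigH, hmtEnd, ← epsUpTo_eq_partialProd]

theorem bigH_zero : bigH P (0 : Fam n A) = 0 := by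
  rw [← coe_sum_partialProd_mul_hmtEnd, map_zero]

theorem bigD_bigD (f : Fam n A) : bigD (bigD f) = 0 := by
  have h := sum_mul_self_eq_zero_of_anticommute Finset.univ (bdEnd (n := n) (A := A))
    (fun i => LinearMap.ext (bd_bd_self (i := i)))
    (fun i j hij => LinearMap.ext (bd_bd_add_bd_bd hij))
  rw [← coe_sum_bdEnd]
  exact LinearMap.congr_fun h f

theorem bigD_bigH_add_bigH_bigD (f : Fam n A) :
    bigD (bigH P f) + bigH P (bigD f) = f - epsUpTo P n f := by
  have h := sum_mul_add_mul_sum_eq_one_sub_partialProd (d := bdEnd) (e := epsEnd P) (hmtEnd P)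
    (fun i => LinearMap.ext (bd_hmt_add_hmt_bd_self P i))
    (fun i j hij => LinearMap.ext (bd_hmt_add_hmt_bd P hij))
    (fun i j hij => LinearMap.ext (bd_eps_comm P hij))
    (fun i => LinearMap.ext (bd_eps_self P)) (fun i => LinearMap.ext (eps_bd_self P))
  have := LinearMap.congr_fun h f
  rw [← coe_sum_bdEnd, ← coe_sum_partialProd_mul_hmtEnd, epsUpTo_eq_partialProd_last]
  simpa using this

end Complex

section Augmentation

variable {n : ℕ} {A : Type*} [Ring A] (P : Fin n → A)

theorem epsUpTo_bigD (f : Fam n A) : epsUpTo P n (bigD f) = 0 := by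
  have hE : ∀ j, Fin.partialProd (epsEnd P) (Fin.last n) * bdEnd j = 0 := fun j =>
    partialProd_mul_eq_zero (fun i j hij => LinearMap.ext (bd_eps_comm P hij))
      (fun i => LinearMap.ext (eps_bd_self P)) (Fin.castSucc_lt_last j)
  rw [epsUpTo_eq_partialProd_last, ← coe_sum_bdEnd, ← Module.End.mul_apply, Finset.mul_sum,
    Finset.sum_eq_zero fun j _ => hE j, LinearMap.zero_apply]

theorem prod_map_epsEnd_apply {L : List (Fin n)} (hL : L.Nodup) (f : Fam n A)
    (s : Fin n → SignType) :
    (L.map (epsEnd P)).prod f s =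
      (L.map fun k => signedPsgn P k (s k)).prod * ∑ t, cubeWeight L s t • f t := by
  induction L generalizing s with
  | nil => simp [cubeWeight_nil]
  | cons a L ih =>
    obtain ⟨ha, hL⟩ := List.nodup_cons.mp hL
    have hcoeff : ∀ σ, (L.map fun k => signedPsgn P k (update s a σ k)).prod =
        (L.map fun k => signedPsgn P k (s k)).prod := fun σ =>
      congrArg List.prod (List.map_congr_left fun k hk => by
        rw [update_of_ne (ne_of_mem_of_not_mem hk ha)])
    simp only [List.map_cons, List.prod_cons, Module.End.mul_apply, epsEnd,
      AddMonoidHom.coe_toIntLinearMap, AddMonoidHom.mk'_apply, eps_apply, ih hL, hcoeff,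
      ← mul_sub, ← Finset.sum_sub_distrib, ← sub_smul, ← cubeWeight_cons_eq_sub ha, mul_assoc]

theorem dHat_eq_sum (f : Fam n A) : dHat f = ∑ t, (∏ k, (t k : ℤ)) • f t := by
  refine Fintype.sum_of_injective (fun γ j => if γ j then (1 : SignType) else -1) ?_ _ _ ?_ ?_
  · intro γ γ' h
    funext j
    have := congrFun h j
    by_cases hj : γ j <;> by_cases hj' : γ' j <;> simp_all
  · intro t ht
    obtain ⟨k, hk⟩ : ∃ k, t k = 0 := by
      by_contra! h
      refine ht ⟨fun j => t j = 1, funext fun j => ?_⟩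
      rcases SignType.trichotomy (t j) with h' | h' | h' <;> simp_all
    rw [Finset.prod_eq_zero (Finset.mem_univ k) (by simp [hk]), zero_smul]
  · intro γ
    congr 1
    exact Finset.prod_congr rfl fun j _ => by by_cases hj : γ j <;> simp [hj]

theorem hHat_apply (a : A) (s : Fin n → SignType) :
    hHat P a s = ((List.finRange n).map fun k => signedPsgn P k (s k)).prod * a := by
  simp only [hHat, signedPsgn, List.prod_map_smul, ← Fin.prod_univ_def, smul_mul_assoc]
  split_ifs with h
  · rfl
  · obtain ⟨k, hk⟩ := not_forall_not.mp h
    rw [Finset.prod_eq_zero (Finset.mem_univ k) (by simp [hk]), zero_smul]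

theorem epsUpTo_eq_hHat_dHat (f : Fam n A) : epsUpTo P n f = hHat P (dHat f) := by
  funext s
  rw [epsUpTo_eq_partialProd_last, Fin.partialProd, List.take_of_length_le (by simp),
    List.ofFn_eq_map, prod_map_epsEnd_apply P (List.nodup_finRange n), hHat_apply, dHat_eq_sum]
  simp_rw [cubeWeight_finRange]

theorem sum_smul_signedPsgn (k : Fin n) : ∑ σ : SignType, (σ : ℤ) • signedPsgn P k σ = 1 := by
  rw [SignType.univ_eq]
  simp [signedPsgn, Psgn]

theorem dHat_hHat (a : A) : dHat (hHat P a) = a := by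
  simp_rw [dHat_eq_sum, hHat_apply, ← smul_mul_assoc, ← Finset.sum_mul,
    ← cubeWeight_finRange (fun _ => 0),
    sum_cubeWeight_smul_prod (signedPsgn P) (List.nodup_finRange n), sum_smul_signedPsgn]
  simp

theorem dHat_bigD (f : Fam n A) : dHat (bigD f) = 0 := by
  -- for any choice of the `P i`, `∂̂ = ∂̂ Ĥ ∂̂ = ∂̂ ε_1 ⋯ ε_n`, and `ε_1 ⋯ ε_n ∂ = 0`
  calc dHat (bigD f) = dHat (hHat 0 (dHat (bigD f))) := (dHat_hHat 0 _).symm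
    _ = 0 := by rw [← epsUpTo_eq_hHat_dHat, epsUpTo_bigD]; simp [dHat]

end Augmentation

section Degree

variable {n : ℕ} {A : Type*} [Ring A] {f : Fam n A}

theorem degS_eq_one_iff {s : Fin n → SignType} : degS s = 1 ↔ ∀ k, s k ≠ 0 := by
  simp [degS, Finset.filter_eq_empty_iff]

theorem bigD_eq_zero_of_degS (hf : ∀ s, degS s ≠ 1 → f s = 0) : bigD f = 0 := by
  funext s
  refine Finset.sum_eq_zero fun j _ => ?_
  by_cases hj : s j = 0
  · simp [bd, hj]
  · rw [bd_apply_of_ne_zero hj, hf _ fun h => degS_eq_one_iff.mp h j (by simp), smul_zero]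

theorem dHat_eq_zero_of_degS (hf : ∀ s, degS s = 1 → f s = 0) : dHat f = 0 :=
  Finset.sum_eq_zero fun γ _ => by
    rw [hf _ (degS_eq_one_iff.mpr fun k => by by_cases hk : γ k <;> simp [hk]), smul_zero]

end Degree

theorem cube_complex_exact_general {n : ℕ} {A : Type*} [Ring A] (P : Fin n → A) :
    -- N^• is a complex
    (∀ f : Fam n A, bigD (bigD f) = 0) ∧
    (∀ f : Fam n A, dHat (bigD f) = 0) ∧
    -- contracting homotopy in degrees ≥ 2
    (∀ p : ℕ, 2 ≤ p → ∀ f : Fam n A, (∀ s, degS s ≠ p → f s = 0) →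
      bigD (bigH P f) + bigH P (bigD f) = f) ∧
    -- ∂H + Ĥ∂̂ = 1 on N^1
    (∀ f : Fam n A, (∀ s, degS s ≠ 1 → f s = 0) →
      bigD (bigH P f) + hHat P (dHat f) = f) ∧
    -- ∂̂Ĥ = 1 on N^0
    (∀ a : A, dHat (hHat P a) = a) := by
  refine ⟨bigD_bigD, dHat_bigD, fun p hp f hf => ?_, fun f hf => ?_, dHat_hHat P⟩
  · have hε : epsUpTo P n f = 0 := by
      rw [epsUpTo_eq_hHat_dHat, dHat_eq_zero_of_degS fun s hs => hf s (by omega)]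
      funext s
      simp [hHat_apply]
    rw [bigD_bigH_add_bigH_bigD, hε, sub_zero]
  · have h := bigD_bigH_add_bigH_bigD P f
    rw [bigD_eq_zero_of_degS hf, bigH_zero, add_zero,
      epsUpTo_eq_hHat_dHat] at h
    rw [h, sub_add_cancel]

theorem cube_complex_exact {n : ℕ} {A : Type*} [Ring A] (P : Fin n → A)
    (hidem : ∀ i, P i * P i = P i)
    (hcomm : ∀ i j, P i * P j = P j * P i) :
    -- N^• is a complex
    (∀ f : Fam n A, bigD (bigD f) = 0) ∧
    (∀ f : Fam n A, dHat (bigD f) = 0) ∧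
    -- contracting homotopy in degrees ≥ 2
    (∀ p : ℕ, 2 ≤ p → ∀ f : Fam n A, (∀ s, degS s ≠ p → f s = 0) →
      bigD (bigH P f) + bigH P (bigD f) = f) ∧
    -- ∂H + Ĥ∂̂ = 1 on N^1
    (∀ f : Fam n A, (∀ s, degS s ≠ 1 → f s = 0) →
      bigD (bigH P f) + hHat P (dHat f) = f) ∧
    -- ∂̂Ĥ = 1 on N^0
    (∀ a : A, dHat (hHat P a) = a) :=
  cube_complex_exact_general P
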